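/- With notation as above (C the image in PGL₂(F_q) of the nonsingular-matrix group C̃ arising from F_{q²}^×, and D the image of the upper triangular matrices), PGL₂(F_q) = C·D and C ∩ D = 1. In other words, PGL₂(F_q) admits an exact factorization by the solvable subgroups C and D. -/

import Mathlib

/-!
Multiplication on `F_{q²} = F[α]` in the basis `(1, α)` embeds `F_{q²}ˣ` in `GL₂(F)` as `C̃`, and
since `F_{q²}` is a field, `C̃` acts simply transitively on the nonzero vectors of `F²`: the unique
element of `C̃` with a prescribed first column `(a, b)` is that of `a + bα`. So every `M` is `P · T`
with `P ∈ C̃` having the first column of `M` and `T = P⁻¹ M` fixing `e₁`, i.e. upper triangular.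
An element of `C̃` that is upper triangular has `b = 0`, hence is scalar, giving `C ∩ D = 1`.
`C` is abelian and `D` is a quotient of the solvable group of upper triangular matrices.
-/

open Matrix Polynomial

/-- `PGL₂(F)`: the general linear group modulo its center. -/
abbrev PGL2 (F : Type*) [Field F] := GL (Fin 2) F ⧸ Subgroup.center (GL (Fin 2) F)

namespace Matrix.GeneralLinearGroup

lemma inv_mul_val_apply_of_val_apply_eq {n R : Type*} [Fintype n] [DecidableEq n] [CommRing R]
    {P M : GL n R} {j : n} (h : ∀ i, P.val i j = M.val i j) (i : n) :
    (P⁻¹ * M).val i j = (1 : Matrix n n R) i j := by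
  simp only [Units.val_mul, mul_apply, ← h]
  rw [← mul_apply, ← Units.val_mul, inv_mul_cancel, Units.val_one]

section UpperTriangular

variable (R : Type*) [CommRing R]

def upperTriangular : Subgroup (GL (Fin 2) R) where
  carrier := {M | M.val 1 0 = 0}
  one_mem' := by simp
  mul_mem' {A B} hA hB := by
    simp_all [mul_apply, Fin.sum_univ_two]
  inv_mem' {A} hA := by
    simp_all [inv_def, adjugate_fin_two]

variable {R}

lemma det_of_mem_upperTriangular {M : GL (Fin 2) R} (hM : M ∈ upperTriangular R) :
    M.val.det = M.val 0 0 * M.val 1 1 := by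
  rw [det_fin_two, show M.val 1 0 = 0 from hM, mul_zero, sub_zero]

lemma isUnit_mul_diag_of_mem_upperTriangular {M : GL (Fin 2) R} (hM : M ∈ upperTriangular R) :
    IsUnit (M.val 0 0 * M.val 1 1) :=
  det_of_mem_upperTriangular hM ▸ (isUnit_iff_isUnit_det _).mp M.isUnit

lemma isUnit_apply_zero_zero_of_mem_upperTriangular {M : GL (Fin 2) R}
    (hM : M ∈ upperTriangular R) : IsUnit (M.val 0 0) :=
  isUnit_of_mul_isUnit_left (isUnit_mul_diag_of_mem_upperTriangular hM)

lemma isUnit_apply_one_one_of_mem_upperTriangular {M : GL (Fin 2) R}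
    (hM : M ∈ upperTriangular R) : IsUnit (M.val 1 1) :=
  isUnit_of_mul_isUnit_right (isUnit_mul_diag_of_mem_upperTriangular hM)

variable (R) in
noncomputable def upperTriangularDiag : upperTriangular R →* Rˣ × Rˣ where
  toFun M := ((isUnit_apply_zero_zero_of_mem_upperTriangular M.2).unit,
    (isUnit_apply_one_one_of_mem_upperTriangular M.2).unit)
  map_one' := by ext <;> simp
  map_mul' M N := by
    have hM : M.1.val 1 0 = 0 := M.2
    have hN : N.1.val 1 0 = 0 := N.2
    ext <;> simp [mul_apply, Fin.sum_univ_two, hM, hN]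

lemma val_eq_of_mem_ker_upperTriangularDiag {M : upperTriangular R}
    (hM : M ∈ (upperTriangularDiag R).ker) : M.1.val = !![1, M.1.val 0 1; 0, 1] := by
  have h10 : M.1.val 1 0 = 0 := M.2
  simp only [MonoidHom.mem_ker, upperTriangularDiag, MonoidHom.coe_mk, OneHom.coe_mk,
    Prod.mk_eq_one, Units.ext_iff, IsUnit.unit_spec, Units.val_one] at hM
  ext i j
  fin_cases i <;> fin_cases j <;> simp [h10, hM]

instance : Group.IsSolvable (upperTriangular R) := by
  have : Group.IsSolvable (upperTriangularDiag R).ker := Group.isSolvable_of_comm fun M N ↦ by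
    ext1; ext1; ext1
    simp only [Subgroup.coe_mul, Units.val_mul]
    rw [val_eq_of_mem_ker_upperTriangularDiag M.2, val_eq_of_mem_ker_upperTriangularDiag N.2]
    simp [add_comm]
  exact Group.isSolvable_of_ker_le_range (upperTriangularDiag R).ker.subtype
    (upperTriangularDiag R) (Subgroup.range_subtype _).ge

lemma center_le_upperTriangular : Subgroup.center (GL (Fin 2) R) ≤ upperTriangular R := by
  intro M hM
  obtain ⟨a, ha⟩ := mem_center_iff_val_mem_range_scalar.mp hM
  show M.val 1 0 = 0
  simp [← ha]

lemma mk_mem_map_upperTriangular_iff {M : GL (Fin 2) R} :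
    (QuotientGroup.mk M : GL (Fin 2) R ⧸ Subgroup.center (GL (Fin 2) R)) ∈
      (upperTriangular R).map (QuotientGroup.mk' _) ↔ M ∈ upperTriangular R :=
  SetLike.ext_iff.mp (Subgroup.comap_map_eq_self
    ((QuotientGroup.ker_mk' _).trans_le center_le_upperTriangular)) M

end UpperTriangular

end Matrix.GeneralLinearGroup

section QuadraticExtension

variable {R : Type*} [CommRing R] (c d : R)

/-- The matrix of multiplication by `a + bα` on `R[α] = R[X]/(X² + cX + d)` in the basis
`(1, α)`. -/
def quadMulMatrix (a b : R) : Matrix (Fin 2) (Fin 2) R := !![a, -d * b; b, a - c * b]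

lemma quadMulMatrix_commute (a b a' b' : R) :
    Commute (quadMulMatrix c d a b) (quadMulMatrix c d a' b') := by
  ext i j
  fin_cases i <;> fin_cases j <;> simp [quadMulMatrix, mul_apply, Fin.sum_univ_two] <;> ring

lemma det_quadMulMatrix (a b : R) :
    (quadMulMatrix c d a b).det = a ^ 2 - c * a * b + d * b ^ 2 := by
  rw [quadMulMatrix, det_fin_two_of]
  ring

end QuadraticExtension

section Field

variable {F : Type*} [Field F] {c d : F}

lemma quadratic_ne_zero_of_irreducible (hirr : Irreducible (X ^ 2 + C c * X + C d)) (r : F) :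
    r ^ 2 + c * r + d ≠ 0 := by
  have hdeg : (X ^ 2 + C c * X + C d).natDegree = 2 := by compute_degree!
  simpa using hirr.not_isRoot_of_natDegree_ne_one (by omega) (x := r)

lemma quadratic_ne_zero_of_minpoly_eq {K : Type*} [Ring K] [IsDomain K] [Algebra F K] {x : K}
    (hmin : minpoly F x = X ^ 2 + C c * X + C d) (r : F) : r ^ 2 + c * r + d ≠ 0 := by
  have hint : IsIntegral F x := minpoly.ne_zero_iff.mp <| hmin ▸ (by monicity! :
    (X ^ 2 + C c * X + C d).Monic).ne_zero
  exact quadratic_ne_zero_of_irreducible (hmin ▸ minpoly.irreducible hint) r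

lemma det_quadMulMatrix_ne_zero (hroot : ∀ r : F, r ^ 2 + c * r + d ≠ 0) {a b : F}
    (hab : (a, b) ≠ (0, 0)) : (quadMulMatrix c d a b).det ≠ 0 := by
  rw [det_quadMulMatrix]
  by_cases hb : b = 0
  · simpa [hb] using hab
  · have key : (-(a / b)) ^ 2 + c * (-(a / b)) + d = (a ^ 2 - c * a * b + d * b ^ 2) / b ^ 2 := by
      field_simp
      ring
    intro h
    exact hroot (-(a / b)) (by rw [key, h, zero_div])

open Matrix.GeneralLinearGroup

lemma exists_quadMulMatrix_inv_mul_mem_upperTriangular (hroot : ∀ r : F, r ^ 2 + c * r + d ≠ 0)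
    (M : GL (Fin 2) F) : ∃ P : GL (Fin 2) F,
      (∃ a b : F, (a, b) ≠ (0, 0) ∧ P.val = quadMulMatrix c d a b) ∧
      P⁻¹ * M ∈ upperTriangular F := by
  have hcol : (M.val 0 0, M.val 1 0) ≠ (0, 0) := by
    intro h
    have hdet := (isUnit_iff_isUnit_det _).mp M.isUnit
    simp_all [det_fin_two]
  let P := GeneralLinearGroup.mkOfDetNeZero _ (det_quadMulMatrix_ne_zero hroot hcol)
  refine ⟨P, ⟨_, _, hcol, rfl⟩, ?_⟩
  -- `P` and `M` have the same first column, so `P⁻¹ * M` fixes the first basis vector.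
  have hfirst := inv_mul_val_apply_of_val_apply_eq (P := P) (M := M) (j := 0) (fun i ↦ by
    fin_cases i <;> rfl) 1
  exact hfirst.trans (one_apply_ne' Fin.zero_ne_one)

lemma mem_center_of_val_eq_quadMulMatrix {P : GL (Fin 2) F} {a b : F}
    (hP : P.val = quadMulMatrix c d a b) (hPtri : P ∈ upperTriangular F) :
    P ∈ Subgroup.center (GL (Fin 2) F) := by
  have h10 : P.val 1 0 = 0 := hPtri
  have hb : b = 0 := by simpa [hP, quadMulMatrix] using h10
  refine mem_center_iff_val_mem_range_scalar.mpr ⟨a, ?_⟩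
  rw [hP, quadMulMatrix, hb]
  ext i j
  fin_cases i <;> fin_cases j <;> simp

end Field

theorem pgl_two_exact_factorization_general
    (F K : Type*) [Field F] [Field K] [Algebra F K]
    (g : Kˣ)
    (c d : F) (hmin : minpoly F (g : K) = X ^ 2 + C c * X + C d)
    (C D : Subgroup (PGL2 F))
    (hC : ∀ x : PGL2 F, x ∈ C ↔ ∃ M : GL (Fin 2) F,
      (∃ a b : F, (a, b) ≠ (0, 0) ∧ M.val = !![a, -d * b; b, a - c * b]) ∧
      (QuotientGroup.mk M : PGL2 F) = x)
    (hD : ∀ x : PGL2 F, x ∈ D ↔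
      ∃ M : GL (Fin 2) F, M.val 1 0 = 0 ∧ (QuotientGroup.mk M : PGL2 F) = x) :
    IsSolvable C ∧ IsSolvable D ∧
      (∀ x : PGL2 F, ∃ a ∈ C, ∃ b ∈ D, x = a * b) ∧ C ⊓ D = ⊥ := by
  have hroot := quadratic_ne_zero_of_minpoly_eq hmin
  have hD' : D = (GeneralLinearGroup.upperTriangular F).map (QuotientGroup.mk' _) := by
    ext x
    rw [hD, Subgroup.mem_map]
    rfl
  refine ⟨Group.isSolvable_of_comm ?_,
    hD' ▸ Group.isSolvable_of_surjective (MonoidHom.subgroupMap_surjective _ _), fun x ↦ ?_, ?_⟩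
  · rintro ⟨-, hx⟩ ⟨-, hy⟩
    obtain ⟨M, ⟨a, b, -, hM⟩, rfl⟩ := (hC _).mp hx
    obtain ⟨N, ⟨a', b', -, hN⟩, rfl⟩ := (hC _).mp hy
    have hMN : M * N = N * M := Units.ext <| by
      rw [Units.val_mul, Units.val_mul, hM, hN]
      exact (quadMulMatrix_commute c d a b a' b').eq
    exact Subtype.ext (by simp only [Subgroup.coe_mul, ← QuotientGroup.mk_mul, hMN])
  · obtain ⟨M, rfl⟩ := QuotientGroup.mk_surjective x
    obtain ⟨P, hP, hPM⟩ := exists_quadMulMatrix_inv_mul_mem_upperTriangular hroot M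
    exact ⟨_, (hC _).mpr ⟨P, hP, rfl⟩, _, (hD _).mpr ⟨_, hPM, rfl⟩,
      by rw [← QuotientGroup.mk_mul, mul_inv_cancel_left]⟩
  · refine eq_bot_iff.mpr fun x hx ↦ ?_
    obtain ⟨hxC, hxD⟩ := Subgroup.mem_inf.mp hx
    obtain ⟨P, ⟨a, b, -, hP⟩, rfl⟩ := (hC x).mp hxC
    have hPtri := GeneralLinearGroup.mk_mem_map_upperTriangular_iff.mp (hD' ▸ hxD)
    exact (QuotientGroup.eq_one_iff P).mpr (mem_center_of_val_eq_quadMulMatrix hP hPtri)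

theorem pgl_two_exact_factorization
    (F K : Type*) [Field F] [Fintype F] [Field K] [Fintype K] [Algebra F K]
    (hcard : Fintype.card K = Fintype.card F ^ 2)
    (g : Kˣ) (hgen : ∀ u : Kˣ, u ∈ Subgroup.zpowers g)
    (c d : F) (hmin : minpoly F (g : K) = X ^ 2 + C c * X + C d)
    (C D : Subgroup (PGL2 F))
    (hC : ∀ x : PGL2 F, x ∈ C ↔ ∃ M : GL (Fin 2) F,
      (∃ a b : F, (a, b) ≠ (0, 0) ∧ M.val = !![a, -d * b; b, a - c * b]) ∧
      (QuotientGroup.mk M : PGL2 F) = x)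
    (hD : ∀ x : PGL2 F, x ∈ D ↔
      ∃ M : GL (Fin 2) F, M.val 1 0 = 0 ∧ (QuotientGroup.mk M : PGL2 F) = x) :
    IsSolvable C ∧ IsSolvable D ∧
      (∀ x : PGL2 F, ∃ a ∈ C, ∃ b ∈ D, x = a * b) ∧ C ⊓ D = ⊥ :=
  pgl_two_exact_factorization_general F K g c d hmin C D hC hD
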